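/- Schur complement restriction property: for a positive semidefinite operator matrix M indexed by \{0,\dots,n-1\} and nested index sets I \subseteq J \subseteq \{0,\dots,n-1\}, the Schur complement of M supported on I equals the Schur complement supported on I of the Schur complement of M supported on J: S(M; I) = S(S(M; J); I). -/

import Mathlib

open scoped ComplexOrder
open ContinuousLinearMap

/-- The orthogonal projection of the Hilbert direct sum `⊕ᵢ H i` onto the coordinates in
the index set `Λ`. -/
noncomputable def coordProj {n : ℕ} {H : Fin n → Type*}
    [∀ i, NormedAddCommGroup (H i)] [∀ i, InnerProductSpace ℂ (H i)]
    (Λ : Finset (Fin n)) : PiLp 2 H →L[ℂ] PiLp 2 H :=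
  (PiLp.continuousLinearEquiv 2 ℂ H).symm.toContinuousLinearMap ∘L
    (ContinuousLinearMap.pi fun i =>
      if i ∈ Λ then ContinuousLinearMap.proj i else 0) ∘L
    (PiLp.continuousLinearEquiv 2 ℂ H).toContinuousLinearMap

/-- `S` is the Schur complement of `M` supported on the range of the orthogonal projection
`P`: `S` is positive, supported on `ran P`, `M - S ≥ 0`, and `S` is the largest such. -/
def IsSchurCompl {K : Type*} [NormedAddCommGroup K] [InnerProductSpace ℂ K]
    (M P S : K →L[ℂ] K) : Prop :=
  (∀ x, 0 ≤ (inner ℂ (S x) x : ℂ)) ∧ P ∘L S ∘L P = S ∧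
  (∀ x, 0 ≤ (inner ℂ ((M - S) x) x : ℂ)) ∧
  ∀ S' : K →L[ℂ] K, (∀ x, 0 ≤ (inner ℂ (S' x) x : ℂ)) → P ∘L S' ∘L P = S' →
    (∀ x, 0 ≤ (inner ℂ ((M - S') x) x : ℂ)) →
    ∀ x, (inner ℂ (S' x) x : ℂ).re ≤ (inner ℂ (S x) x : ℂ).re

/-! Restricting twice is restricting once: if `P` is a sub-projection of `Q`, every candidate
for `S(M; P)` is supported on `ran Q`, so the maximality of `S(M; Q)` gives `S(M; P) ≤ S(M; Q)`;
conversely every candidate for `S(S(M; Q); P)` lies below `S(M; Q) ≤ M`, hence is a candidate for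
`S(M; P)`. -/

section Quadratic

variable {K : Type*} [NormedAddCommGroup K] [InnerProductSpace ℂ K]

lemma inner_sub_apply_nonneg_trans {A B C : K →L[ℂ] K} {x : K}
    (hAB : 0 ≤ inner ℂ ((A - B) x) x) (hBC : 0 ≤ inner ℂ ((B - C) x) x) :
    0 ≤ inner ℂ ((A - C) x) x := by
  rw [← sub_add_sub_cancel A B C, add_apply, inner_add_left]
  exact add_nonneg hAB hBC

lemma inner_sub_apply_nonneg_of_re_le {A B : K →L[ℂ] K} {x : K}
    (hA : 0 ≤ inner ℂ (A x) x) (hB : 0 ≤ inner ℂ (B x) x)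
    (hle : (inner ℂ (A x) x).re ≤ (inner ℂ (B x) x).re) :
    0 ≤ inner ℂ ((B - A) x) x := by
  rw [sub_apply, inner_sub_left, sub_nonneg, Complex.le_def]
  rw [Complex.nonneg_iff] at hA hB
  exact ⟨hle, hA.2.symm.trans hB.2⟩

lemma comp_comp_eq_of_comp_eq_of_comp_eq {P Q S : K →L[ℂ] K} (hQP : Q ∘L P = P)
    (hPQ : P ∘L Q = P) (hS : P ∘L S ∘L P = S) : Q ∘L S ∘L Q = S := by
  rw [← hS]
  simp only [← comp_assoc, hQP]
  simp only [comp_assoc, hPQ]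

end Quadratic

namespace IsSchurCompl

variable {K : Type*} [NormedAddCommGroup K] [InnerProductSpace ℂ K]

lemma re_inner_apply_le {M P Q SP SQ : K →L[ℂ] K} (hQP : Q ∘L P = P) (hPQ : P ∘L Q = P)
    (hSQ : IsSchurCompl M Q SQ) (hSP : IsSchurCompl M P SP) (x : K) :
    (inner ℂ (SP x) x).re ≤ (inner ℂ (SQ x) x).re :=
  hSQ.2.2.2 SP hSP.1 (comp_comp_eq_of_comp_eq_of_comp_eq hQP hPQ hSP.2.1) hSP.2.2.1 x

theorem of_nested {M P Q SP SQ : K →L[ℂ] K} (hQP : Q ∘L P = P) (hPQ : P ∘L Q = P)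
    (hSQ : IsSchurCompl M Q SQ) (hSP : IsSchurCompl M P SP) :
    IsSchurCompl SQ P SP := by
  refine ⟨hSP.1, hSP.2.1, fun x => ?_, fun S' hS'pos hS'supp hS'le => ?_⟩
  · exact inner_sub_apply_nonneg_of_re_le (hSP.1 x) (hSQ.1 x)
      (re_inner_apply_le hQP hPQ hSQ hSP x)
  · exact hSP.2.2.2 S' hS'pos hS'supp fun x =>
      inner_sub_apply_nonneg_trans (hSQ.2.2.1 x) (hS'le x)

end IsSchurCompl

section CoordProj

variable {n : ℕ} {H : Fin n → Type*} [∀ i, NormedAddCommGroup (H i)]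
  [∀ i, InnerProductSpace ℂ (H i)]

lemma coordProj_apply (Λ : Finset (Fin n)) (x : PiLp 2 H) (i : Fin n) :
    coordProj Λ x i = if i ∈ Λ then x i else 0 := by
  simp only [coordProj, comp_apply, ContinuousLinearEquiv.coe_coe]
  by_cases h : i ∈ Λ <;> simp [h]

lemma coordProj_comp_coordProj_of_subset {I J : Finset (Fin n)} (hIJ : I ⊆ J) :
    coordProj J ∘L coordProj I = (coordProj I : PiLp 2 H →L[ℂ] PiLp 2 H) := by
  ext x i
  by_cases hI : i ∈ I
  · simp [coordProj_apply, hI, hIJ hI]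
  · simp [coordProj_apply, hI]

lemma coordProj_comp_coordProj_of_superset {I J : Finset (Fin n)} (hIJ : I ⊆ J) :
    coordProj I ∘L coordProj J = (coordProj I : PiLp 2 H →L[ℂ] PiLp 2 H) := by
  ext x i
  by_cases hI : i ∈ I
  · simp [coordProj_apply, hI, hIJ hI]
  · simp [coordProj_apply, hI]

end CoordProj

theorem stmt_15_general {n : ℕ} {H : Fin n → Type*}
    [∀ i, NormedAddCommGroup (H i)] [∀ i, InnerProductSpace ℂ (H i)]
    (M : PiLp 2 H →L[ℂ] PiLp 2 H)
    (I J : Finset (Fin n)) (hIJ : I ⊆ J)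
    (SJ : PiLp 2 H →L[ℂ] PiLp 2 H) (hSJ : IsSchurCompl M (coordProj J) SJ)
    (SI : PiLp 2 H →L[ℂ] PiLp 2 H) (hSI : IsSchurCompl M (coordProj I) SI) :
    IsSchurCompl SJ (coordProj I) SI :=
  hSJ.of_nested (coordProj_comp_coordProj_of_subset hIJ)
    (coordProj_comp_coordProj_of_superset hIJ) hSI

/-- Schur complement restriction property: for a positive semidefinite block operator matrix
`M` indexed by `{0, …, n-1}` and nested index sets `I ⊆ J`, the Schur complement of `M`
supported on `I` equals the Schur complement, supported on `I`, of the Schur complement of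
`M` supported on `J`:  `S(M; I) = S(S(M; J); I)`. -/
theorem stmt_15 {n : ℕ} {H : Fin n → Type*}
    [∀ i, NormedAddCommGroup (H i)] [∀ i, InnerProductSpace ℂ (H i)]
    [∀ i, CompleteSpace (H i)]
    (M : PiLp 2 H →L[ℂ] PiLp 2 H) (hM : ∀ x, 0 ≤ (inner ℂ (M x) x : ℂ))
    (I J : Finset (Fin n)) (hIJ : I ⊆ J)
    (SJ : PiLp 2 H →L[ℂ] PiLp 2 H) (hSJ : IsSchurCompl M (coordProj J) SJ)
    (SI : PiLp 2 H →L[ℂ] PiLp 2 H) (hSI : IsSchurCompl M (coordProj I) SI) :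
    IsSchurCompl SJ (coordProj I) SI :=
  stmt_15_general M I J hIJ SJ hSJ SI hSI
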